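/- With Ẽ(x ⊗ y) = ∑_{i,j} φ_j(x)(M_j^i)* y M_j^i where φ_k(x) = Tr((ρ_k ⊗ |k⟩⟨k|)x)/Tr(ρ_k), the two-fold iterate satisfies Ẽ(x₁ ⊗ Ẽ(x₂ ⊗ I)) = ∑_{j,v} ((B_v^j)* B_v^j ⊗ |v⟩⟨v|) φ_v(x₁) φ_j(x₂). -/

import Mathlib

/-! Conjugation by `M_j^i = B_j^i ⊗ |i⟩⟨j|` kills a block `X ⊗ |k⟩⟨k|` unless `k = i`, and sends
`X ⊗ |i⟩⟨i|` to `(B_j^i)* X B_j^i ⊗ |j⟩⟨j|`. So `Ẽ(x ⊗ ·)` maps block-diagonal matrices to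
block-diagonal ones by an explicit formula. Writing `I = ∑_k I ⊗ |k⟩⟨k|` and using
`∑_i (B_j^i)* B_j^i = I`, it gives `Ẽ(x₂ ⊗ I) = ∑_j φ_j(x₂) I ⊗ |j⟩⟨j|`; a second application
of the formula gives the iterate. -/

open Matrix Kronecker BigOperators ComplexOrder

/-- The dual transition expectation
`Ẽ(x ⊗ y) = ∑_{i,j} φ_j(x) • (M_j^i)* y M_j^i`, `φ_j(x) = Tr((ρ_j ⊗ |j⟩⟨j|) x)/Tr ρ_j`. -/
noncomputable def dualTransExp {n Λ : Type*} [Fintype n] [Fintype Λ] [DecidableEq n] [DecidableEq Λ]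
    (B : Λ → Λ → Matrix n n ℂ) (ρf : Λ → Matrix n n ℂ)
    (x y : Matrix (n × Λ) (n × Λ) ℂ) : Matrix (n × Λ) (n × Λ) ℂ :=
  ∑ i, ∑ j,
    (((ρf j ⊗ₖ Matrix.single j j (1 : ℂ)) * x).trace / (ρf j).trace) •
      (((B i j) ⊗ₖ Matrix.single i j (1 : ℂ))ᴴ * y *
        ((B i j) ⊗ₖ Matrix.single i j (1 : ℂ)))

namespace Matrix

variable {R ι l m n p : Type*}

theorem sum_kronecker [NonUnitalNonAssocSemiring R] (s : Finset ι) (A : ι → Matrix l m R)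
    (E : Matrix n p R) : (∑ i ∈ s, A i) ⊗ₖ E = ∑ i ∈ s, A i ⊗ₖ E := by
  ext ⟨a, b⟩ ⟨c, d⟩
  simp [Matrix.sum_apply, Finset.sum_mul]

theorem kronecker_sum [NonUnitalNonAssocSemiring R] (s : Finset ι) (A : Matrix l m R)
    (E : ι → Matrix n p R) : A ⊗ₖ (∑ i ∈ s, E i) = ∑ i ∈ s, A ⊗ₖ E i := by
  ext ⟨a, b⟩ ⟨c, d⟩
  simp [Matrix.sum_apply, Finset.mul_sum]

theorem one_eq_sum_one_kronecker_single [Semiring R] [DecidableEq m] [Fintype n] [DecidableEq n] :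
    (1 : Matrix (m × n) (m × n) R) = ∑ k, (1 : Matrix m m R) ⊗ₖ single k k 1 := by
  rw [← kronecker_sum, sum_single_one, one_kronecker_one]

theorem conjTranspose_kronecker_single_mul_mul [CommSemiring R] [StarRing R] [Fintype m]
    [Fintype n] [DecidableEq n] (A X C : Matrix m m R) (i j k : n) :
    (A ⊗ₖ single i j 1)ᴴ * (X ⊗ₖ single k k 1) * (C ⊗ₖ single i j 1)
      = if k = i then (Aᴴ * X * C) ⊗ₖ single j j 1 else 0 := by
  rw [conjTranspose_kronecker, conjTranspose_single, star_one, ← mul_kronecker_mul,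
    ← mul_kronecker_mul]
  split_ifs with h
  · simp [h]
  · rw [single_mul_single_of_ne (h := Ne.symm h), zero_mul, kronecker_zero]

end Matrix

noncomputable def blockState {n Λ : Type*} [Fintype n] [Fintype Λ] [DecidableEq Λ]
    (ρf : Λ → Matrix n n ℂ) (k : Λ) (x : Matrix (n × Λ) (n × Λ) ℂ) : ℂ :=
  ((ρf k ⊗ₖ single k k 1) * x).trace / (ρf k).trace

section
variable {n Λ : Type*} [Fintype n] [Fintype Λ] [DecidableEq n] [DecidableEq Λ]
  (B : Λ → Λ → Matrix n n ℂ) (ρf : Λ → Matrix n n ℂ) (x : Matrix (n × Λ) (n × Λ) ℂ)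

theorem dualTransExp_sum_kronecker_single (X : Λ → Matrix n n ℂ) :
    dualTransExp B ρf x (∑ k, X k ⊗ₖ single k k 1)
      = ∑ i, ∑ j, blockState ρf j x • ((B i j)ᴴ * X i * B i j) ⊗ₖ single j j 1 := by
  simp only [dualTransExp, blockState, Matrix.mul_sum, Matrix.sum_mul,
    conjTranspose_kronecker_single_mul_mul, Finset.sum_ite_eq', Finset.mem_univ, if_true]

theorem dualTransExp_one (hB : ∀ j, ∑ i, (B i j)ᴴ * B i j = 1) :
    dualTransExp B ρf x 1 = ∑ j, (blockState ρf j x • 1) ⊗ₖ single j j 1 := by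
  rw [one_eq_sum_one_kronecker_single, dualTransExp_sum_kronecker_single, Finset.sum_comm]
  refine Finset.sum_congr rfl fun j _ => ?_
  simp only [mul_one, ← Finset.smul_sum, ← sum_kronecker, hB, smul_kronecker]

end

theorem dualTransExp_iterate_general
    {n Λ : Type*} [Fintype n] [Fintype Λ] [DecidableEq n] [DecidableEq Λ]
    (B : Λ → Λ → Matrix n n ℂ)
    (hB : ∀ j, ∑ i, (B i j)ᴴ * B i j = 1)
    (ρf : Λ → Matrix n n ℂ)
    (φ : Λ → Matrix (n × Λ) (n × Λ) ℂ → ℂ)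
    (hφ : ∀ k x, φ k x = ((ρf k ⊗ₖ Matrix.single k k (1 : ℂ)) * x).trace / (ρf k).trace)
    (x₁ x₂ : Matrix (n × Λ) (n × Λ) ℂ) :
    dualTransExp B ρf x₁ (dualTransExp B ρf x₂ 1)
      = ∑ j, ∑ v, (φ v x₁ * φ j x₂) •
          (((B j v)ᴴ * B j v) ⊗ₖ Matrix.single v v (1 : ℂ)) := by
  obtain rfl : φ = blockState ρf := funext₂ hφ
  rw [dualTransExp_one B ρf x₂ hB, dualTransExp_sum_kronecker_single]
  simp only [Matrix.mul_smul, Matrix.smul_mul, mul_one, smul_kronecker, smul_smul]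

/-- The two-fold iterate of the dual transition expectation:
`Ẽ(x₁ ⊗ Ẽ(x₂ ⊗ 1)) = ∑_{j,v} φ_v(x₁) φ_j(x₂) • ((B_v^j)* B_v^j ⊗ |v⟩⟨v|)`. -/
theorem dualTransExp_iterate
    {n Λ : Type*} [Fintype n] [Fintype Λ] [DecidableEq n] [DecidableEq Λ]
    (B : Λ → Λ → Matrix n n ℂ)
    (hB : ∀ j, ∑ i, (B i j)ᴴ * B i j = 1)
    (ρf : Λ → Matrix n n ℂ)
    (hpos : ∀ j, (ρf j).PosSemidef)
    (htr : ∀ j, 0 < (ρf j).trace)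
    (φ : Λ → Matrix (n × Λ) (n × Λ) ℂ → ℂ)
    (hφ : ∀ k x, φ k x = ((ρf k ⊗ₖ Matrix.single k k (1 : ℂ)) * x).trace / (ρf k).trace)
    (x₁ x₂ : Matrix (n × Λ) (n × Λ) ℂ) :
    dualTransExp B ρf x₁ (dualTransExp B ρf x₂ 1)
      = ∑ j, ∑ v, (φ v x₁ * φ j x₂) •
          (((B j v)ᴴ * B j v) ⊗ₖ Matrix.single v v (1 : ℂ)) :=
  dualTransExp_iterate_general B hB ρf φ hφ x₁ x₂
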